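/- Let G be a finite abelian group and let B^{(1)}, …, B^{(k)} be Bohr sets in G, B^{(i)} = B(Γ_i, ε^{(i)}). Then |B^{(1)} ∩ ⋯ ∩ B^{(k)}| / |G| ≥ ∏_{i=1}^{k} |B^{(i)}_{1/2}| / |G|, where B^{(i)}_{1/2} = B(Γ_i, ε^{(i)}/2). -/

import Mathlib

/-- For `z` on the unit circle, `‖z‖ = |arg z| / (2π)`. -/
noncomputable def bohrNorm (z : ℂ) : ℝ := |Complex.arg z| / (2 * Real.pi)

open Classical in
/-- The Bohr set `B(Γ, ε) = {n ∈ G : ‖γ(n)‖ < ε_γ for all γ ∈ Γ}`. -/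
noncomputable def bohrSet {G : Type*} [AddCommGroup G] [Fintype G]
    (Γ : Finset (AddChar G ℂ)) (ε : AddChar G ℂ → ℝ) : Finset G :=
  Finset.univ.filter fun n => ∀ γ ∈ Γ, bohrNorm (γ n) < ε γ

/-- A Bohr set `B(Γ, ε)` of dimension `d = |Γ|` is regular if for all `η` with
`d|η| ≤ 1/100` one has `(1 − 100d|η|)|B_1| < |B_{1+η}| < (1 + 100d|η|)|B_1|`. -/
def IsRegularBohr {G : Type*} [AddCommGroup G] [Fintype G]
    (Γ : Finset (AddChar G ℂ)) (ε : AddChar G ℂ → ℝ) : Prop :=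
  ∀ η : ℝ, (Γ.card : ℝ) * |η| ≤ 1 / 100 →
    (1 - 100 * Γ.card * |η|) * (bohrSet Γ ε).card
        < ((bohrSet Γ (fun γ => (1 + η) * ε γ)).card : ℝ) ∧
    ((bohrSet Γ (fun γ => (1 + η) * ε γ)).card : ℝ)
        < (1 + 100 * Γ.card * |η|) * (bohrSet Γ ε).card

open Classical in
/-- Indicator function of a finite set, real-valued. -/
noncomputable def indic {G : Type*} (B : Finset G) : G → ℝ := fun x => if x ∈ B then 1 else 0

/-- Normalized indicator (uniform measure) of a finite set. -/
noncomputable def muFn {G : Type*} (B : Finset G) : G → ℝ := fun x => indic B x / B.card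

/-- Convolution `(f ∗ g)(x) = ∑_y f(y) g(x − y)` on a finite abelian group. -/
noncomputable def conv {G : Type*} [AddCommGroup G] [Fintype G] (f g : G → ℝ) : G → ℝ :=
  fun x => ∑ y, f y * g (x - y)

/-!
Write `X_i = B⁽ⁱ⁾_{1/2}`; subadditivity of `‖·‖` on the circle gives `X_i - X_i ⊆ B⁽ⁱ⁾`.
For a shift `s ∈ Gᵏ` let `Y_s = {u : u + s_i ∈ X_i for all i}`. The sets `Y_s` have total size
`|G| ∏ |X_i|`, so some `Y_s` has at least `|G|¹⁻ᵏ ∏ |X_i|` elements, and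
`|Y_s| ≤ |Y_s - Y_s| ≤ |⋂ (X_i - X_i)| ≤ |⋂ B⁽ⁱ⁾|`.
-/

open Finset
open scoped Pointwise

lemma Real.Angle.norm_eq_abs_toReal (θ : Real.Angle) : ‖θ‖ = |θ.toReal| := by
  conv_lhs => rw [← θ.coe_toReal]
  refine (AddCircle.norm_coe_eq_abs_iff (p := 2 * Real.pi) Real.two_pi_pos.ne').2 ?_
  rw [abs_of_pos Real.two_pi_pos]
  linarith [θ.abs_toReal_le_pi]

lemma Complex.abs_arg_mul_le {z w : ℂ} (hz : z ≠ 0) (hw : w ≠ 0) :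
    |arg (z * w)| ≤ |arg z| + |arg w| := by
  rw [← arg_coe_angle_toReal_eq_arg (z * w), ← arg_coe_angle_toReal_eq_arg z,
    ← arg_coe_angle_toReal_eq_arg w]
  simp only [← Real.Angle.norm_eq_abs_toReal, arg_mul_coe_angle hz hw]
  exact norm_add_le _ _

lemma bohrNorm_mul_le {z w : ℂ} (hz : z ≠ 0) (hw : w ≠ 0) :
    bohrNorm (z * w) ≤ bohrNorm z + bohrNorm w := by
  rw [bohrNorm, bohrNorm, bohrNorm, ← add_div]
  gcongr
  exact Complex.abs_arg_mul_le hz hw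

@[simp]
lemma bohrNorm_inv (z : ℂ) : bohrNorm z⁻¹ = bohrNorm z := by
  simp [bohrNorm]

section BohrSet

variable {G : Type*} [AddCommGroup G] [Fintype G] {Γ : Finset (AddChar G ℂ)}
  {δ ε : AddChar G ℂ → ℝ} {a b : G}

lemma mem_bohrSet : a ∈ bohrSet Γ ε ↔ ∀ γ ∈ Γ, bohrNorm (γ a) < ε γ := by
  simp [bohrSet]

lemma add_mem_bohrSet (ha : a ∈ bohrSet Γ δ) (hb : b ∈ bohrSet Γ ε) :
    a + b ∈ bohrSet Γ (δ + ε) := by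
  rw [mem_bohrSet] at ha hb ⊢
  intro γ hγ
  rw [AddChar.map_add_eq_mul]
  calc bohrNorm (γ a * γ b) ≤ bohrNorm (γ a) + bohrNorm (γ b) :=
        bohrNorm_mul_le (γ.val_isUnit a).ne_zero (γ.val_isUnit b).ne_zero
    _ < δ γ + ε γ := add_lt_add (ha γ hγ) (hb γ hγ)

lemma neg_mem_bohrSet (ha : a ∈ bohrSet Γ ε) : -a ∈ bohrSet Γ ε := by
  simpa [mem_bohrSet, AddChar.map_neg_eq_inv] using ha

lemma sub_mem_bohrSet (ha : a ∈ bohrSet Γ δ) (hb : b ∈ bohrSet Γ ε) :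
    a - b ∈ bohrSet Γ (δ + ε) :=
  sub_eq_add_neg a b ▸ add_mem_bohrSet ha (neg_mem_bohrSet hb)

lemma bohrSet_half_sub_bohrSet_half_subset [DecidableEq G] :
    bohrSet Γ (fun γ => ε γ / 2) - bohrSet Γ (fun γ => ε γ / 2) ⊆ bohrSet Γ ε := by
  intro d hd
  obtain ⟨a, ha, b, hb, rfl⟩ := mem_sub.1 hd
  have hε : (fun γ => ε γ / 2) + (fun γ => ε γ / 2) = ε := funext fun γ => add_halves (ε γ)
  exact hε ▸ sub_mem_bohrSet ha hb

end BohrSet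

section Translates

variable {G ι : Type*} [AddCommGroup G] [Fintype G] [DecidableEq G] [Fintype ι] [DecidableEq ι]

lemma card_filter_forall_add_mem (X : ι → Finset G) (u : G) :
    #{s : ι → G | ∀ i, u + s i ∈ X i} = ∏ i, #(X i) := by
  rw [← Fintype.card_piFinset]
  refine card_nbij' (fun s i => u + s i) (fun s i => s i - u) ?_ ?_ ?_ ?_ <;>
    intro s hs <;> simp_all

lemma sum_card_filter_forall_add_mem (X : ι → Finset G) :
    ∑ s : ι → G, #{u | ∀ i, u + s i ∈ X i} = Fintype.card G * ∏ i, #(X i) := by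
  simp only [card_filter]
  rw [sum_comm]
  simp only [← card_filter, card_filter_forall_add_mem, sum_const, card_univ, smul_eq_mul]

theorem card_mul_prod_card_le_pow_mul_card (X : ι → Finset G) {S : Finset G}
    (hS : ∀ d, (∀ i, d ∈ X i - X i) → d ∈ S) :
    Fintype.card G * ∏ i, #(X i) ≤ Fintype.card G ^ Fintype.card ι * #S := by
  obtain ⟨s, -, hs⟩ := exists_le_of_sum_le (s := univ) univ_nonempty
    (f := fun _ => Fintype.card G * ∏ i, #(X i))
    (g := fun s : ι → G => Fintype.card G ^ Fintype.card ι * #{u | ∀ i, u + s i ∈ X i})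
    (by simp [← mul_sum, sum_card_filter_forall_add_mem])
  refine hs.trans (Nat.mul_le_mul_left _ (card_le_card_sub_self.trans (card_le_card ?_)))
  intro d hd
  obtain ⟨u, hu, v, hv, rfl⟩ := mem_sub.1 hd
  simp only [mem_filter, mem_univ, true_and] at hu hv
  exact hS _ fun i => add_sub_add_right_eq_sub u v (s i) ▸ sub_mem_sub (hu i) (hv i)

end Translates

open Classical in
theorem bohrSet_inter_card_general {G : Type*} [AddCommGroup G] [Fintype G]
    (k : ℕ) (Γ : Fin k → Finset (AddChar G ℂ)) (ε : Fin k → (AddChar G ℂ → ℝ)) :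
    ∏ i, ((bohrSet (Γ i) (fun γ => ε i γ / 2)).card : ℝ) / (Fintype.card G : ℝ) ≤
      (((Finset.univ.filter fun n => ∀ i, n ∈ bohrSet (Γ i) (ε i)).card : ℝ)) /
        (Fintype.card G : ℝ) := by
  set X := fun i => bohrSet (Γ i) (fun γ => ε i γ / 2)
  have hbound := card_mul_prod_card_le_pow_mul_card X
    (S := {n | ∀ i, n ∈ bohrSet (Γ i) (ε i)}) fun d hd => by
      simpa using fun i => bohrSet_half_sub_bohrSet_half_subset (hd i)
  have hG : (0 : ℝ) < Fintype.card G := mod_cast Fintype.card_pos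
  rw [prod_div_distrib, prod_const, card_univ, Fintype.card_fin,
    div_le_div_iff₀ (by positivity) hG, mul_comm, mul_comm (_ : ℝ) (_ ^ k)]
  simpa using (Nat.cast_le (α := ℝ)).2 hbound

open Classical in
/-- Intersection bound for Bohr sets:
`μ_G(B⁽¹⁾ ∩ ⋯ ∩ B⁽ᵏ⁾) ≥ ∏ᵢ μ_G(B⁽ⁱ⁾_{1/2})`. -/
theorem bohrSet_inter_card {G : Type*} [AddCommGroup G] [Fintype G]
    (k : ℕ) (Γ : Fin k → Finset (AddChar G ℂ)) (ε : Fin k → (AddChar G ℂ → ℝ))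
    (hε : ∀ i, ∀ γ ∈ Γ i, 0 < ε i γ ∧ ε i γ ≤ 1) :
    ∏ i, ((bohrSet (Γ i) (fun γ => ε i γ / 2)).card : ℝ) / (Fintype.card G : ℝ) ≤
      (((Finset.univ.filter fun n => ∀ i, n ∈ bohrSet (Γ i) (ε i)).card : ℝ)) /
        (Fintype.card G : ℝ) :=
  bohrSet_inter_card_general k Γ ε
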